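/- arXiv:2307.05702 — 6 statements merged into one kernel-verified Lean document; each statement's English description precedes it below -/
import Mathlib

section
/- For all α, β, γ ∈ [0,1], the matrix ρ̃₀₀(α,β,γ) is Hermitian and positive semidefinite. -/
open Matrix Kronecker ComplexOrder

def idx (p : Fin 2 × Fin 2) : Fin 4 := ⟨2 * p.1.val + p.2.val, by omega⟩

noncomputable def ρ00Fin4 (α β γ : ℝ) : Matrix (Fin 4) (Fin 4) ℂ :=
  !![((α^2 * (1 + γ^2))/2 : ℝ), 0, 0, ((α * β * (1 - γ))/2 : ℝ);
     0, ((α * β * γ * (1 - γ))/2 : ℝ), 0, 0;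
     0, 0, ((α * β * γ * (1 - γ))/2 : ℝ), 0;
     ((α * β * (1 - γ))/2 : ℝ), 0, 0, ((β^2 * (1 - γ)^2)/2 : ℝ)]

noncomputable def ρ00 (α β γ : ℝ) : Matrix (Fin 2 × Fin 2) (Fin 2 × Fin 2) ℂ :=
  (ρ00Fin4 α β γ).submatrix idx idx

noncomputable def rvec (α β γ : ℝ) : Fin 4 → ℂ :=
  ![((α/Real.sqrt 2 : ℝ) : ℂ), 0, 0, ((β*(1-γ)/Real.sqrt 2 : ℝ) : ℂ)]

noncomputable def dvec (α β γ : ℝ) : Fin 4 → ℂ :=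
  ![((α^2*γ^2/2 : ℝ) : ℂ), ((α*β*γ*(1-γ)/2 : ℝ) : ℂ), ((α*β*γ*(1-γ)/2 : ℝ) : ℂ), ((0:ℝ) : ℂ)]

lemma decomp (α β γ : ℝ) :
    ρ00Fin4 α β γ =
      vecMulVec (rvec α β γ) (star (rvec α β γ)) + Matrix.diagonal (dvec α β γ) := by
  have hsqc : ((Real.sqrt 2 : ℝ) : ℂ) * ((Real.sqrt 2 : ℝ) : ℂ) = 2 := by
    rw [← Complex.ofReal_mul, Real.mul_self_sqrt (by norm_num : (0:ℝ) ≤ 2)]; norm_num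
  have h2' : (Real.sqrt 2) ≠ 0 := by positivity
  ext i j
  simp only [Matrix.add_apply, vecMulVec_apply]
  fin_cases i <;> fin_cases j <;>
    simp [ρ00Fin4, rvec, dvec, vecMulVec_apply, Matrix.diagonal, Matrix.vecHead,
      Matrix.vecTail, ← Complex.ofReal_mul, ← Complex.ofReal_add] <;>
    (try field_simp) <;> (try simp only [hsqc, sq]) <;> (try push_cast) <;> (try ring)

lemma rank1_psd (α β γ : ℝ) :
    (vecMulVec (rvec α β γ) (star (rvec α β γ))).PosSemidef := by
  rw [vecMulVec_eq Unit,
    show Matrix.replicateRow Unit (star (rvec α β γ)) = (Matrix.replicateCol Unit (rvec α β γ))ᴴ from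
      (Matrix.conjTranspose_replicateCol _).symm]
  exact posSemidef_self_mul_conjTranspose _

/-- For all α, β, γ ∈ [0,1], the matrix ρ̃₀₀(α,β,γ) is Hermitian and
positive semidefinite. -/
theorem reflected_state_hermitian_posSemidef (α β γ : ℝ)
    (hα : α ∈ Set.Icc (0:ℝ) 1) (hβ : β ∈ Set.Icc (0:ℝ) 1)
    (hγ : γ ∈ Set.Icc (0:ℝ) 1) :
    (ρ00 α β γ).IsHermitian ∧ (ρ00 α β γ).PosSemidef := by
  obtain ⟨hα0, hα1⟩ := hα
  obtain ⟨hβ0, hβ1⟩ := hβ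
  obtain ⟨hγ0, hγ1⟩ := hγ
  have hγ1' : 0 ≤ 1 - γ := by linarith
  have h2 : (Matrix.diagonal (dvec α β γ)).PosSemidef := by
    refine posSemidef_diagonal_iff.mpr fun i => ?_
    fin_cases i <;> exact Complex.zero_le_real.mpr (by positivity)
  have hps : (ρ00Fin4 α β γ).PosSemidef := by
    rw [decomp]
    exact (rank1_psd α β γ).add h2
  have := hps.submatrix idx
  exact ⟨this.isHermitian, this⟩
end

section
/- For all α, β, γ ∈ ℝ, the characteristic polynomial of the partial transpose over the second qubit of ρ̃₀₀(α,β,γ) factors as (x − λ₁)(x − λ₂)(x − λ₃)(x − λ₄), where λ₁ = −αβ(1−γ)²/2, λ₂ = β²(1−γ)²/2, λ₃ = α²(1+γ²)/2, and λ₄ = αβ(1−γ²)/2. -/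
/-!
Partial transposition over the second qubit moves the coherence between |00⟩ and |11⟩ to the
pair |01⟩, |10⟩. In the basis order |00⟩, |01⟩, |10⟩, |11⟩ the result is therefore
diag(p) ⊕ [[d, c], [c, d]] ⊕ diag(q), whose eigenvalues are p, q and d ± c.
-/

open Matrix Kronecker Polynomial

/-- Partial transpose over the second qubit:
M^{T_B}[(a,b),(a',b')] = M[(a,b'),(a',b)]. -/
def ptB (M : Matrix (Fin 2 × Fin 2) (Fin 2 × Fin 2) ℂ) :
    Matrix (Fin 2 × Fin 2) (Fin 2 × Fin 2) ℂ :=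
  Matrix.of fun p q => M (p.1, q.2) (q.1, p.2)

theorem Matrix.charpoly_submatrix_equiv {m n R : Type*} [Fintype m] [DecidableEq m]
    [Fintype n] [DecidableEq n] [CommRing R] (M : Matrix n n R) (e : m ≃ n) :
    (M.submatrix e e).charpoly = M.charpoly :=
  charpoly_reindex e.symm M

lemma idx_bijective : Function.Bijective idx := by decide

theorem Matrix.charpoly_fin_four_middle_block {R : Type*} [CommRing R] (p d c q : R) :
    (!![p, 0, 0, 0; 0, d, c, 0; 0, c, d, 0; 0, 0, 0, q] : Matrix (Fin 4) (Fin 4) R).charpoly =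
      (X - C (d - c)) * (X - C q) * (X - C p) * (X - C (d + c)) := by
  simp [charpoly, det_succ_row_zero, Fin.sum_univ_succ, charmatrix_apply, C_sub, C_add]
  ring

lemma ptB_ρ00 (α β γ : ℝ) :
    ptB (ρ00 α β γ) =
      (!![((α^2 * (1 + γ^2))/2 : ℝ), 0, 0, 0;
          0, ((α * β * γ * (1 - γ))/2 : ℝ), ((α * β * (1 - γ))/2 : ℝ), 0;
          0, ((α * β * (1 - γ))/2 : ℝ), ((α * β * γ * (1 - γ))/2 : ℝ), 0;
          0, 0, 0, ((β^2 * (1 - γ)^2)/2 : ℝ)] : Matrix (Fin 4) (Fin 4) ℂ).submatrix idx idx := by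
  ext ⟨a, b⟩ ⟨a', b'⟩
  fin_cases a <;> fin_cases b <;> fin_cases a' <;> fin_cases b' <;> rfl

/-- For all α, β, γ ∈ ℝ, the characteristic polynomial of ρ̃₀₀(α,β,γ)^{T_B}
factors as (x − λ₁)(x − λ₂)(x − λ₃)(x − λ₄) with
λ₁ = −αβ(1−γ)²/2, λ₂ = β²(1−γ)²/2, λ₃ = α²(1+γ²)/2, λ₄ = αβ(1−γ²)/2. -/
theorem reflected_state_partial_transpose_charpoly (α β γ : ℝ) :
    (ptB (ρ00 α β γ)).charpoly =
      (X - C ((-(α * β * (1 - γ)^2 / 2) : ℝ) : ℂ)) *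
      (X - C (((β^2 * (1 - γ)^2 / 2) : ℝ) : ℂ)) *
      (X - C (((α^2 * (1 + γ^2) / 2) : ℝ) : ℂ)) *
      (X - C (((α * β * (1 - γ^2) / 2) : ℝ) : ℂ)) := by
  rw [ptB_ρ00, ← Equiv.coe_ofBijective (f := idx) idx_bijective, charpoly_submatrix_equiv,
    charpoly_fin_four_middle_block]
  congr 5 <;> push_cast <;> ring
end

section
/- For all α, β, γ ∈ ℝ, the vector v = (0, 1, −1, 0) (in the basis |00⟩,|01⟩,|10⟩,|11⟩) is an eigenvector of the partial transpose over the second qubit of ρ̃₀₀(α,β,γ) with eigenvalue −αβ(1−γ)²/2. -/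
open Matrix Kronecker

/-- The vector v = (0, 1, −1, 0) in the ordered basis |00⟩,|01⟩,|10⟩,|11⟩. -/
noncomputable def v : (Fin 2 × Fin 2) → ℂ :=
  fun p => if p = (0, 1) then 1 else if p = (1, 0) then -1 else 0

/-- For all α, β, γ ∈ ℝ, the vector v = (0,1,−1,0) is an eigenvector of
ρ̃₀₀(α,β,γ)^{T_B} with eigenvalue −αβ(1−γ)²/2. -/
theorem reflected_state_partial_transpose_eigenvector (α β γ : ℝ) :
    v ≠ 0 ∧
      (ptB (ρ00 α β γ)) *ᵥ v = ((-(α * β * (1 - γ)^2 / 2) : ℝ) : ℂ) • v := by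
  constructor
  · intro h
    have : v (0, 1) = 0 := by rw [h]; rfl
    simp [v] at this
  · funext p
    fin_cases p <;>
      simp [Matrix.mulVec, dotProduct, Fintype.sum_prod_type, Fin.sum_univ_two, ptB, ρ00, ρ00Fin4, idx, v,
        Matrix.submatrix, Prod.ext_iff, Fin.ext_iff, -Fin.val_eq_zero_iff] <;>
      push_cast <;> ring
end

section
/- For all α, β ∈ (0,1] and γ ∈ [0,1), the partial transpose over the second qubit of ρ̃₀₀(α,β,γ) is not positive semidefinite (i.e., ρ̃₀₀ fails the PPT criterion). -/
open Matrix Kronecker ComplexOrder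

/-- For all α, β ∈ (0,1] and γ ∈ [0,1), the partial transpose over the second
qubit of ρ̃₀₀(α,β,γ) is not positive semidefinite (failure of the PPT criterion). -/
theorem reflected_state_fails_PPT (α β γ : ℝ)
    (hα : α ∈ Set.Ioc (0:ℝ) 1) (hβ : β ∈ Set.Ioc (0:ℝ) 1)
    (hγ : γ ∈ Set.Ico (0:ℝ) 1) :
    ¬ (ptB (ρ00 α β γ)).PosSemidef := by
  intro h
  set x : Fin 2 × Fin 2 → ℂ := fun p => if p = (0,1) then 1 else if p = (1,0) then -1 else 0 with hx
  have key := h.dotProduct_mulVec_nonneg x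
  have hval : star x ⬝ᵥ (ptB (ρ00 α β γ)) *ᵥ x
      = ((α * β * γ * (1 - γ)) - (α * β * (1 - γ)) : ℝ) := by
    simp only [dotProduct, mulVec, ptB, ρ00, ρ00Fin4, Matrix.submatrix_apply, Matrix.of_apply,
      Fintype.sum_prod_type, Fin.sum_univ_two, hx]
    norm_num [idx, Prod.ext_iff, Matrix.cons_val_zero, Matrix.cons_val_one]
    ring
  rw [hval] at key
  have h1 : 0 < α := hα.1
  have h2 : 0 < β := hβ.1
  have h4 : γ < 1 := hγ.2
  have hneg : (α * β * γ * (1 - γ)) - (α * β * (1 - γ)) < 0 := by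
    nlinarith [mul_pos (mul_pos h1 h2) (mul_pos (sub_pos.mpr h4) (sub_pos.mpr h4))]
  have : (0:ℝ) ≤ (α * β * γ * (1 - γ)) - (α * β * (1 - γ)) := by exact_mod_cast key
  linarith
end

section
/- If a 4×4 complex matrix M can be written as a finite sum M = Σᵢ Aᵢ ⊗ Bᵢ where each Aᵢ and each Bᵢ is a positive semidefinite 2×2 complex matrix, then the partial transpose of M over the second qubit is positive semidefinite. -/
open Matrix Kronecker ComplexOrder

lemma kron_conjTranspose (A B : Matrix (Fin 2) (Fin 2) ℂ) :
    (A ⊗ₖ B)ᴴ = Aᴴ ⊗ₖ Bᴴ := by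
  ext ⟨a, b⟩ ⟨c, d⟩
  simp [conjTranspose_apply, kronecker_apply, mul_comm]

lemma kron_posSemidef {A B : Matrix (Fin 2) (Fin 2) ℂ}
    (hA : A.PosSemidef) (hB : B.PosSemidef) : (A ⊗ₖ B).PosSemidef := by
  obtain ⟨C, rfl⟩ : ∃ C : Matrix (Fin 2) (Fin 2) ℂ, A = Cᴴ * C := by
    open scoped MatrixOrder in exact CStarAlgebra.nonneg_iff_eq_star_mul_self.mp hA.nonneg
  obtain ⟨D, rfl⟩ : ∃ D : Matrix (Fin 2) (Fin 2) ℂ, B = Dᴴ * D := by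
    open scoped MatrixOrder in exact CStarAlgebra.nonneg_iff_eq_star_mul_self.mp hB.nonneg
  have e : (Cᴴ * C) ⊗ₖ (Dᴴ * D) = (C ⊗ₖ D)ᴴ * (C ⊗ₖ D) := by
    rw [kron_conjTranspose, Matrix.mul_kronecker_mul]
  rw [e]
  exact Matrix.posSemidef_conjTranspose_mul_self _

/-- If a 4×4 complex matrix M is a finite sum Σᵢ Aᵢ ⊗ Bᵢ of Kronecker products
of positive semidefinite 2×2 matrices, then its partial transpose over the
second qubit is positive semidefinite. -/
theorem separable_implies_PPT (M : Matrix (Fin 2 × Fin 2) (Fin 2 × Fin 2) ℂ)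
    (n : ℕ) (A B : Fin n → Matrix (Fin 2) (Fin 2) ℂ)
    (hA : ∀ i, (A i).PosSemidef) (hB : ∀ i, (B i).PosSemidef)
    (hM : M = ∑ i, A i ⊗ₖ B i) :
    (ptB M).PosSemidef := by
  have h : ptB M = ∑ i, A i ⊗ₖ (B i)ᵀ := by
    ext ⟨a, b⟩ ⟨c, d⟩
    simp [ptB, hM, Matrix.sum_apply, kronecker_apply, transpose_apply]
  rw [h]
  exact Finset.sum_induction _ Matrix.PosSemidef
    (fun a b ha hb => ha.add hb) Matrix.PosSemidef.zero
    (fun i _ => kron_posSemidef (hA i) ((hB i).transpose))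
end

section
/- (Proposition 1) For all α, β ∈ (0,1] and γ ∈ [0,1), the reflected state ρ̃₀₀(α,β,γ) is entangled: it cannot be written as a finite sum Σᵢ Aᵢ ⊗ Bᵢ of Kronecker products of positive semidefinite 2×2 complex matrices Aᵢ, Bᵢ. -/
open Matrix Kronecker ComplexOrder

/-- Diagonal entries of a 2×2 PSD complex matrix are real and nonnegative. -/
lemma psd_diag_re {M : Matrix (Fin 2) (Fin 2) ℂ} (h : M.PosSemidef) (j : Fin 2) :
    0 ≤ (M j j).re ∧ (M j j).im = 0 := by
  refine ⟨?_, ?_⟩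
  · have := h.re_dotProduct_nonneg (Pi.single j 1)
    simpa [dotProduct, Matrix.mulVec, Pi.single_apply, Fin.sum_univ_two] using this
  · have : (starRingEnd ℂ) (M j j) = M j j := h.isHermitian.apply j j
    exact Complex.conj_eq_iff_im.mp this

/-- For a 2×2 PSD complex matrix, `|M₀₁|² ≤ M₀₀ M₁₁`. -/
lemma psd_offdiag {M : Matrix (Fin 2) (Fin 2) ℂ} (h : M.PosSemidef) :
    ‖M 0 1‖ ^ 2 ≤ (M 0 0).re * (M 1 1).re := by
  have h10 : M 1 0 = (starRingEnd ℂ) (M 0 1) := (h.isHermitian.apply 1 0).symm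
  obtain ⟨ha, ha'⟩ := psd_diag_re h 0
  obtain ⟨hd, hd'⟩ := psd_diag_re h 1
  have e00 : M 0 0 = ((M 0 0).re : ℂ) := Complex.ext (by simp) (by simp [ha'])
  have e11 : M 1 1 = ((M 1 1).re : ℂ) := Complex.ext (by simp) (by simp [hd'])
  set a := (M 0 0).re with haa
  set d := (M 1 1).re with hdd
  have hn : ‖M 0 1‖ ^ 2 = (M 0 1).re ^ 2 + (M 0 1).im ^ 2 := by
    rw [Complex.sq_norm, Complex.normSq_apply]; ring
  rcases eq_or_lt_of_le hd with hr | hr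
  · -- d = 0 : show M 0 1 = 0
    have key : ∀ t : ℝ, 0 ≤ a - 2 * t * ((M 0 1).re ^ 2 + (M 0 1).im ^ 2) := by
      intro t
      have H := h.re_dotProduct_nonneg ![1, -(t : ℂ) * (starRingEnd ℂ) (M 0 1)]
      simp only [dotProduct, Matrix.mulVec, Fin.sum_univ_two, Matrix.cons_val_zero,
        Matrix.cons_val_one, Matrix.head_cons, Pi.star_apply, RCLike.star_def, h10,
        e00, e11, ← hr] at H
      simp only [RCLike.re_to_complex, Complex.add_re, Complex.mul_re, Complex.mul_im,
        Complex.conj_re, Complex.conj_im, Complex.ofReal_re, Complex.ofReal_im,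
        Complex.one_re, Complex.one_im, Complex.neg_re, Complex.neg_im, Complex.add_im,
        Complex.ofReal_zero,
        Complex.zero_re, Complex.zero_im, neg_zero, mul_zero, zero_mul, mul_one, one_mul,
        sub_zero, zero_add, add_zero, zero_sub, mul_neg, neg_mul, neg_neg] at H
      nlinarith
    have hz : (M 0 1).re ^ 2 + (M 0 1).im ^ 2 = 0 := by
      by_contra hne
      have hpos : 0 < (M 0 1).re ^ 2 + (M 0 1).im ^ 2 :=
        lt_of_le_of_ne (by positivity) (Ne.symm hne)
      have := key ((a + 1) / (2 * ((M 0 1).re ^ 2 + (M 0 1).im ^ 2)))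
      have he : 2 * ((a + 1) / (2 * ((M 0 1).re ^ 2 + (M 0 1).im ^ 2))) *
          ((M 0 1).re ^ 2 + (M 0 1).im ^ 2) = a + 1 := by
        field_simp
      rw [he] at this
      linarith
    rw [hn, hz, ← hr, mul_zero]
  · -- d > 0
    have H := h.re_dotProduct_nonneg ![((M 1 1).re : ℂ), -((starRingEnd ℂ) (M 0 1))]
    simp only [dotProduct, Matrix.mulVec, Fin.sum_univ_two, Matrix.cons_val_zero,
      Matrix.cons_val_one, Matrix.head_cons, Pi.star_apply, RCLike.star_def, h10,
      e00, e11] at H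
    simp only [RCLike.re_to_complex, Complex.add_re, Complex.mul_re, Complex.mul_im,
      Complex.conj_re, Complex.conj_im, Complex.ofReal_re, Complex.ofReal_im,
      Complex.neg_re, Complex.neg_im, Complex.add_im, Complex.ofReal_zero,
      Complex.zero_re, Complex.zero_im, neg_zero, mul_zero, zero_mul, mul_one, one_mul,
      sub_zero, zero_add, add_zero, zero_sub, mul_neg, neg_mul, neg_neg] at H
    rw [hn]
    nlinarith [H, hr]

/-- (Proposition 1) For all α, β ∈ (0,1] and γ ∈ [0,1), the reflected state
ρ̃₀₀(α,β,γ) is entangled: it is not a finite sum of Kronecker products of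
positive semidefinite 2×2 complex matrices. -/
theorem reflected_state_entangled (α β γ : ℝ)
    (hα : α ∈ Set.Ioc (0:ℝ) 1) (hβ : β ∈ Set.Ioc (0:ℝ) 1)
    (hγ : γ ∈ Set.Ico (0:ℝ) 1) :
    ¬ ∃ (n : ℕ) (A B : Fin n → Matrix (Fin 2) (Fin 2) ℂ),
        (∀ i, (A i).PosSemidef) ∧ (∀ i, (B i).PosSemidef) ∧
        ρ00 α β γ = ∑ i, A i ⊗ₖ B i := by
  rintro ⟨n, A, B, hA, hB, hEq⟩
  set X : ℝ := α * β * (1 - γ) / 2 with hXdef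
  set Y : ℝ := α * β * γ * (1 - γ) / 2 with hYdef
  -- entry values of ρ00
  have hv1 : ρ00 α β γ (0,0) (1,1) = (X : ℂ) := by
    show ρ00Fin4 α β γ (idx (0,0)) (idx (1,1)) = _
    norm_num [idx, ρ00Fin4, show (⟨0, by omega⟩ : Fin 4) = 0 from rfl,
      show (⟨3, by omega⟩ : Fin 4) = 3 from rfl]
    push_cast [hXdef]
    ring
  have hv2 : ρ00 α β γ (0,1) (0,1) = (Y : ℂ) := by
    show ρ00Fin4 α β γ (idx (0,1)) (idx (0,1)) = _
    norm_num [idx, ρ00Fin4, show (⟨1, by omega⟩ : Fin 4) = 1 from rfl]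
    push_cast [hYdef]
    ring
  have hv3 : ρ00 α β γ (1,0) (1,0) = (Y : ℂ) := by
    show ρ00Fin4 α β γ (idx (1,0)) (idx (1,0)) = _
    norm_num [idx, ρ00Fin4, show (⟨2, by omega⟩ : Fin 4) = 2 from rfl]
    push_cast [hYdef]
    ring
  -- entry equations from the decomposition
  have sumApp : ∀ p q : Fin 2 × Fin 2,
      ρ00 α β γ p q = ∑ i, A i p.1 q.1 * B i p.2 q.2 := by
    intro p q
    rw [hEq]
    simp [Matrix.sum_apply, Matrix.kroneckerMap_apply]
  have E1 : X = (∑ i, A i 0 1 * B i 0 1).re := by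
    have h0 := sumApp (0,0) (1,1)
    rw [hv1] at h0
    simpa using congrArg Complex.re h0
  have E2 : Y = ∑ i, (A i 0 0).re * (B i 1 1).re := by
    have h0 := sumApp (0,1) (0,1)
    rw [hv2] at h0
    have h1 : Y = (∑ i, A i 0 0 * B i 1 1).re := by
      simpa using congrArg Complex.re h0
    rw [h1, Complex.re_sum]
    refine Finset.sum_congr rfl fun i _ => ?_
    rw [Complex.mul_re, (psd_diag_re (hA i) 0).2, (psd_diag_re (hB i) 1).2]
    ring
  have E3 : Y = ∑ i, (A i 1 1).re * (B i 0 0).re := by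
    have h0 := sumApp (1,0) (1,0)
    rw [hv3] at h0
    have h1 : Y = (∑ i, A i 1 1 * B i 0 0).re := by
      simpa using congrArg Complex.re h0
    rw [h1, Complex.re_sum]
    refine Finset.sum_congr rfl fun i _ => ?_
    rw [Complex.mul_re, (psd_diag_re (hA i) 1).2, (psd_diag_re (hB i) 0).2]
    ring
  -- X ≤ S where S is the sum of sqrt terms
  set f : Fin n → ℝ := fun i => Real.sqrt ((A i 0 0).re * (B i 1 1).re) with hf
  set g : Fin n → ℝ := fun i => Real.sqrt ((A i 1 1).re * (B i 0 0).re) with hg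
  have hXS : X ≤ ∑ i, f i * g i := by
    rw [E1]
    calc (∑ i, A i 0 1 * B i 0 1).re ≤ ‖∑ i, A i 0 1 * B i 0 1‖ :=
          Complex.re_le_norm _
      _ ≤ ∑ i, ‖A i 0 1 * B i 0 1‖ := norm_sum_le _ _
      _ ≤ ∑ i, f i * g i := by
          refine Finset.sum_le_sum fun i _ => ?_
          rw [norm_mul]
          have hAi := psd_offdiag (hA i)
          have hBi := psd_offdiag (hB i)
          have ha0 := (psd_diag_re (hA i) 0).1
          have ha1 := (psd_diag_re (hA i) 1).1
          have hb0 := (psd_diag_re (hB i) 0).1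
          have hb1 := (psd_diag_re (hB i) 1).1
          have h1 : (‖A i 0 1‖ * ‖B i 0 1‖) ^ 2 ≤
              ((A i 0 0).re * (B i 1 1).re) * ((A i 1 1).re * (B i 0 0).re) := by
            nlinarith [norm_nonneg (A i 0 1), norm_nonneg (B i 0 1), sq_nonneg (‖B i 0 1‖),
              mul_le_mul hAi hBi (sq_nonneg _) (mul_nonneg ha0 ha1)]
          have h2 : f i * g i = Real.sqrt (((A i 0 0).re * (B i 1 1).re) *
              ((A i 1 1).re * (B i 0 0).re)) := by
            rw [hf, hg, ← Real.sqrt_mul (mul_nonneg ha0 hb1)]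
          rw [h2]
          rw [show ‖A i 0 1‖ * ‖B i 0 1‖ =
            Real.sqrt ((‖A i 0 1‖ * ‖B i 0 1‖) ^ 2) from
            (Real.sqrt_sq (by positivity)).symm]
          exact Real.sqrt_le_sqrt h1
  -- Cauchy–Schwarz
  have hCS : (∑ i, f i * g i) ^ 2 ≤ (∑ i, f i ^ 2) * (∑ i, g i ^ 2) :=
    Finset.sum_mul_sq_le_sq_mul_sq _ _ _
  have hf2 : ∑ i, f i ^ 2 = Y := by
    rw [E2]
    refine Finset.sum_congr rfl fun i _ => ?_
    rw [hf]
    exact Real.sq_sqrt (mul_nonneg (psd_diag_re (hA i) 0).1 (psd_diag_re (hB i) 1).1)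
  have hg2 : ∑ i, g i ^ 2 = Y := by
    rw [E3]
    refine Finset.sum_congr rfl fun i _ => ?_
    rw [hg]
    exact Real.sq_sqrt (mul_nonneg (psd_diag_re (hA i) 1).1 (psd_diag_re (hB i) 0).1)
  rw [hf2, hg2] at hCS
  -- final contradiction
  obtain ⟨hα0, hα1⟩ := hα
  obtain ⟨hβ0, hβ1⟩ := hβ
  obtain ⟨hγ0, hγ1⟩ := hγ
  have h1γ : 0 < 1 - γ := by linarith
  have hXpos : 0 < X := by
    rw [hXdef]
    have := mul_pos (mul_pos hα0 hβ0) h1γ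
    linarith
  have hYX : Y = γ * X := by rw [hXdef, hYdef]; ring
  have hYlt : Y < X := by
    rw [hYX]
    nlinarith
  have hY0 : 0 ≤ Y := by rw [hYX]; exact mul_nonneg hγ0 hXpos.le
  nlinarith [mul_le_mul hXS hXS hXpos.le (hXpos.le.trans hXS), hCS,
    mul_self_lt_mul_self hY0 hYlt]
end
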